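/- arXiv:2403.02160 — 2 statements merged into one kernel-verified Lean document; each statement's English description precedes it below -/
import Mathlib

section
/- Let n ≥ 3, k = 4, and for d ≥ n-1 let h_d = (2+d-n)(d^2+(4-2n)d+4n^2-4n+3)/3. Then for all d ≥ n-1, the largest integer ℓ such that C(ℓ+d-1, ℓ-1) < h_d equals 3; in particular C(d+2, 2) < h_d ≤ C(d+3, 3) for d = n-1, and the inequality C(d+2,2) < h_d persists for all n-1 ≤ d ≤ 2n-3. -/
/-!
In the range `d < 2n` the polynomial `h_d` equals `C(d+3,3) - C(2n-1-d,3)`, which gives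
`h_d ≤ C(d+3,3)` at once. By Pascal's rule, `C(d+2,2) < h_d` becomes `C(2n-1-d,3) < C(d+2,3)`,
true because `2n-1-d < d+2` exactly when `d ≥ n-1`. As `ℓ ↦ C(ℓ+d-1,ℓ-1)` is monotone, these
two bounds force `ℓ_d = 3`.
-/

theorem Nat.cast_choose_three {K : Type*} [Field K] [CharZero K] (a : ℕ) :
    (a.choose 3 : K) = a * (a - 1) * (a - 2) / 6 := by
  rw [Nat.cast_choose_eq_descPochhammer_div]
  simp [descPochhammer_succ_right, Nat.factorial]

theorem Nat.choose_succ_lt_choose_succ_of_lt {m b k : ℕ} (hm : m < b) (hk : k < b) :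
    m.choose (k + 1) < b.choose (k + 1) := by
  obtain ⟨a, rfl⟩ : ∃ a, b = a + 1 := ⟨b - 1, by omega⟩
  rw [Nat.choose_succ_succ']
  have := Nat.choose_le_choose (k + 1) (Nat.le_of_lt_succ hm)
  have := Nat.choose_pos (Nat.le_of_lt_succ hk)
  omega

theorem isGreatest_choose_lt {R : Type*} [Semiring R] [PartialOrder R] [IsOrderedRing R]
    {d k : ℕ} {x : R} (hlo : ((d + k).choose k : R) < x) (hhi : x ≤ (d + k + 1).choose (k + 1)) :
    IsGreatest {ℓ : ℕ | 1 ≤ ℓ ∧ ((ℓ + d - 1).choose (ℓ - 1) : R) < x} (k + 1) := by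
  refine ⟨⟨by omega, ?_⟩, ?_⟩
  · rwa [show k + 1 + d - 1 = d + k by omega, Nat.add_sub_cancel]
  rintro ℓ ⟨-, hℓ⟩
  by_contra! hkℓ
  obtain ⟨j, rfl⟩ : ∃ j, ℓ = j + 1 := ⟨ℓ - 1, by omega⟩
  rw [show j + 1 + d - 1 = j + d by omega, Nat.add_sub_cancel] at hℓ
  have hmono : (d + k + 1).choose (k + 1) ≤ (j + d).choose j := by
    rw [show d + k + 1 = k + 1 + d by omega, Nat.choose_symm_add, Nat.choose_symm_add]
    exact Nat.choose_le_choose d (by omega)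
  exact (hℓ.trans_le hhi).not_ge (Nat.mono_cast hmono)

def hilbertFn (n d : ℕ) : ℚ :=
  (2 + (d : ℚ) - n) * ((d : ℚ) ^ 2 + (4 - 2 * n) * d + 4 * (n : ℚ) ^ 2 - 4 * n + 3) / 3

theorem hilbertFn_eq_choose_sub_choose {n d : ℕ} (hd : d < 2 * n) :
    hilbertFn n d = (d + 3).choose 3 - (2 * n - 1 - d).choose 3 := by
  rw [hilbertFn, Nat.cast_choose_three, Nat.cast_choose_three,
    Nat.cast_sub (by omega : d ≤ 2 * n - 1), Nat.cast_sub (by omega : 1 ≤ 2 * n)]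
  push_cast
  ring

theorem hilbertFn_le_choose_three {n d : ℕ} (hd : d < 2 * n) :
    hilbertFn n d ≤ (d + 3).choose 3 := by
  rw [hilbertFn_eq_choose_sub_choose hd]
  exact sub_le_self _ (Nat.cast_nonneg _)

theorem choose_two_lt_hilbertFn {n d : ℕ} (hn : 2 ≤ n) (hd₁ : n - 1 ≤ d) (hd₂ : d < 2 * n) :
    ((d + 2).choose 2 : ℚ) < hilbertFn n d := by
  have hlt : (2 * n - 1 - d).choose 3 < (d + 2).choose 3 :=
    Nat.choose_succ_lt_choose_succ_of_lt (by omega) (by omega)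
  have hpascal : (d + 3).choose 3 = (d + 2).choose 2 + (d + 2).choose 3 := Nat.choose_succ_succ' _ _
  rw [hilbertFn_eq_choose_sub_choose hd₂, lt_sub_iff_add_lt]
  exact_mod_cast (by omega : (d + 2).choose 2 + (2 * n - 1 - d).choose 3 < (d + 3).choose 3)

/-- Let `n ≥ 3`, `k = 4`, and for `d ≥ n-1` let
`h_d = (2+d-n)(d² + (4-2n)d + 4n² - 4n + 3)/3`. Then for all relevant `d`
(`n-1 ≤ d ≤ 2n-3`), the largest integer `ℓ ≥ 1` with `C(ℓ+d-1, ℓ-1) < h_d` equals `3`;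
in particular `C(d+2, 2) < h_d ≤ C(d+3, 3)`. -/
theorem stmt11 (n d : ℕ) (hn : 3 ≤ n) (hd1 : n - 1 ≤ d) (hd2 : d ≤ 2 * n - 3) :
    ((Nat.choose (d + 2) 2 : ℚ)
        < (2 + (d : ℚ) - n) * ((d : ℚ) ^ 2 + (4 - 2 * n) * d + 4 * (n : ℚ) ^ 2 - 4 * n + 3) / 3
      ∧ (2 + (d : ℚ) - n) * ((d : ℚ) ^ 2 + (4 - 2 * n) * d + 4 * (n : ℚ) ^ 2 - 4 * n + 3) / 3
        ≤ (Nat.choose (d + 3) 3 : ℚ)) ∧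
    IsGreatest {ℓ : ℕ | 1 ≤ ℓ ∧ ((Nat.choose (ℓ + d - 1) (ℓ - 1) : ℚ)
        < (2 + (d : ℚ) - n) * ((d : ℚ) ^ 2 + (4 - 2 * n) * d
            + 4 * (n : ℚ) ^ 2 - 4 * n + 3) / 3)} 3 := by
  have hlo : ((d + 2).choose 2 : ℚ) < hilbertFn n d :=
    choose_two_lt_hilbertFn (by omega) hd1 (by omega)
  have hhi : hilbertFn n d ≤ (d + 3).choose 3 := hilbertFn_le_choose_three (by omega)
  exact ⟨⟨hlo, hhi⟩, isGreatest_choose_lt (k := 2) hlo hhi⟩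
end

section
/- For integers n ≥ 3 and d with n-1 ≤ d < 2n-3, with h_d as given and α_d = (d-2n+3)(d-2n+2)/2, β_d = h_d - α_d: the sequence β is positive and β_{d+1} > h_{d+1}/2; moreover β_{d+1} ≤ C(4+d,3) so that γ_{d+1} = C(4+d,3) - β_{d+1} ≥ 0. -/
/-!
Put `e = d + 1`. The quadratic factor of `h_e` equals `(e + 2 - n)² + 3n² - 1`, so `h_e > 0` as soon
as `e > n - 2`. In the variables `s = e - n ≥ 0` and `m = n - 3 ≥ 0` one has
`α_e = (s - m)(s - m - 1)/2`, which is dominated by the cubic `h_e / 2`; hence `β_e > h_e / 2 > 0`.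
For the upper bound, with `u = 2n - 3 - e` one has the identities `C(e + 3, 3) - h_e = C(u + 2, 3)`
and `α_e = C(u + 1, 2)`, so `C(e + 3, 3) - β_e = u(u + 1)(u + 5)/6 ≥ 0` for `u ≥ 0`.
-/

theorem Nat.cast_add_three_choose_three {K : Type*} [Field K] [CharZero K] (k : ℕ) :
    ((k + 3).choose 3 : K) = (k + 1) * (k + 2) * (k + 3) / 6 := by
  rw [Nat.cast_choose_eq_ascPochhammer_div, show k + 3 - (3 - 1) = k + 1 by omega]
  simp only [ascPochhammer_succ_eval, ascPochhammer_zero, Polynomial.eval_one]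
  push_cast [Nat.factorial]
  ring

namespace DeterminantalMacaulay

def hilb (n e : ℚ) : ℚ := (2 + e - n) * (e ^ 2 + (4 - 2 * n) * e + 4 * n ^ 2 - 4 * n + 3) / 3

def alpha (n e : ℚ) : ℚ := (e - 2 * n + 3) * (e - 2 * n + 2) / 2

def beta (n e : ℚ) : ℚ := hilb n e - alpha n e

variable {n e : ℚ}

theorem hilb_pos (hn : 1 ≤ n) (he : n - 2 < e) : 0 < hilb n e := by
  have hquad : 0 < e ^ 2 + (4 - 2 * n) * e + 4 * n ^ 2 - 4 * n + 3 := by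
    nlinarith [sq_nonneg (e + 2 - n)]
  have hlin : 0 < 2 + e - n := by linarith
  unfold hilb
  positivity

theorem two_mul_alpha_lt_hilb (hn : 3 ≤ n) (he : n ≤ e) : 2 * alpha n e < hilb n e := by
  have hs : 0 ≤ e - n := by linarith
  have hm : 0 ≤ n - 3 := by linarith
  unfold hilb alpha
  nlinarith [mul_nonneg hm hs, mul_nonneg hm hm, mul_nonneg hs hs,
    mul_nonneg (mul_nonneg hs hs) hs, mul_nonneg (mul_nonneg hm hm) hs]

theorem hilb_div_two_lt_beta (hn : 3 ≤ n) (he : n ≤ e) : hilb n e / 2 < beta n e := by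
  have := two_mul_alpha_lt_hilb hn he
  unfold beta
  linarith

theorem beta_pos (hn : 3 ≤ n) (he : n ≤ e) : 0 < beta n e :=
  (half_pos (hilb_pos (by linarith) (by linarith))).trans (hilb_div_two_lt_beta hn he)

theorem choose_sub_beta (n e : ℚ) :
    (e + 1) * (e + 2) * (e + 3) / 6 - beta n e
      = (2 * n - 3 - e) * (2 * n - 2 - e) * (2 * n + 2 - e) / 6 := by
  unfold beta hilb alpha
  ring

theorem beta_le (he : e ≤ 2 * n - 3) : beta n e ≤ (e + 1) * (e + 2) * (e + 3) / 6 := by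
  have hu : 0 ≤ 2 * n - 3 - e := by linarith
  rw [← sub_nonneg, choose_sub_beta]
  exact div_nonneg (mul_nonneg (mul_nonneg hu (by linarith)) (by linarith)) (by norm_num)

end DeterminantalMacaulay

open DeterminantalMacaulay

/-- For integers `n ≥ 3` and `n-1 ≤ d < 2n-3`, with
`h_{d+1} = (2+(d+1)-n)((d+1)² + (4-2n)(d+1) + 4n² - 4n + 3)/3`,
`α_{d+1} = (d-2n+4)(d-2n+3)/2` and `β_{d+1} = h_{d+1} - α_{d+1}`:
`β_{d+1}` is positive, `β_{d+1} > h_{d+1}/2`, and moreover `β_{d+1} ≤ C(4+d,3)`,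
so that `γ_{d+1} = C(4+d,3) - β_{d+1} ≥ 0`. -/
theorem stmt19 (n d : ℤ) (hn : 3 ≤ n) (hd1 : n - 1 ≤ d) (hd2 : d < 2 * n - 3) :
    (let h : ℚ := (2 + ((d : ℚ) + 1) - n) * (((d : ℚ) + 1) ^ 2
        + (4 - 2 * n) * ((d : ℚ) + 1) + 4 * (n : ℚ) ^ 2 - 4 * n + 3) / 3
     let α : ℚ := ((d : ℚ) - 2 * n + 4) * ((d : ℚ) - 2 * n + 3) / 2
     let β : ℚ := h - α
     0 < β ∧ β > h / 2 ∧ β ≤ (Nat.choose (4 + d.toNat) 3 : ℚ) ∧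
       0 ≤ (Nat.choose (4 + d.toNat) 3 : ℚ) - β) := by
  intro h α β
  have hβ : β = beta n (d + 1) := by simp only [β, h, α, beta, hilb, alpha]; ring
  have hchoose :
      (Nat.choose (4 + d.toNat) 3 : ℚ) = (d + 1 + 1) * (d + 1 + 2) * (d + 1 + 3) / 6 := by
    have hd : ((d.toNat : ℕ) : ℚ) = d := by exact_mod_cast Int.toNat_of_nonneg (by omega)
    rw [show 4 + d.toNat = d.toNat + 1 + 3 by omega, Nat.cast_add_three_choose_three]
    push_cast [hd]
    ring
  have hn' : (3 : ℚ) ≤ n := by exact_mod_cast hn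
  have he₁ : (n : ℚ) ≤ d + 1 := by exact_mod_cast (by omega : n ≤ d + 1)
  have he₂ : (d : ℚ) + 1 ≤ 2 * n - 3 := by exact_mod_cast (by omega : d + 1 ≤ 2 * n - 3)
  have hle := beta_le he₂
  rw [hβ, hchoose]
  exact ⟨beta_pos hn' he₁, hilb_div_two_lt_beta hn' he₁, hle, sub_nonneg.2 hle⟩
end
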